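/- arXiv:1801.04412 — 3 statements merged into one kernel-verified Lean document; each statement's English description precedes it below -/
import Mathlib

section
/- Let μ₁, μ₂, μ₃ be the antisymmetric matrices corresponding to 𝔱₂𝔢₃−𝔱₃𝔢₂, 𝔱₃𝔢₁−𝔱₁𝔢₃, 𝔱₁𝔢₂−𝔱₂𝔢₁. Then for any v = α₁μ₁ + α₂μ₂ + α₃μ₃ with αᵢ ∈ ℝ, the V¹-component (projection onto ℝ·ω, ω the identity) of the product ⋆₃(v∧v) has norm exactly (1/√6)(α₁² + α₂² + α₃²) = (1/√6)|v|², where |μᵢ| = 1 under the normalization used. -/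
open Matrix

/-- Levi-Civita symbol on `Fin 3` (Vandermonde formula). -/
noncomputable def eps (i j k : Fin 3) : ℝ :=
  ((i : ℝ) - (j : ℝ)) * ((j : ℝ) - (k : ℝ)) * ((k : ℝ) - (i : ℝ)) / 2

/-- The quadratic operation `Q(v) = ⋆₃(v ∧ v)` on `su(2)`-valued 1-forms on `S³`,
in the matrix model `v = Σ M_{ia} 𝔱ᵢ 𝔢ₐ`:
`Q(M)_{kc} = ½ Σ ε_{ijk} ε_{abc} M_{ia} M_{jb}`. -/
noncomputable def kwQ (M : Matrix (Fin 3) (Fin 3) ℝ) : Matrix (Fin 3) (Fin 3) ℝ :=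
  Matrix.of fun k c =>
    (1 / 2) * ∑ i, ∑ j, ∑ a, ∑ b, eps i j k * eps a b c * M i a * M j b

/-- The pointwise norm used in the paper: `|𝔱ᵢ𝔢ⱼ| = 1/√2` for the matrix units,
so that `|μᵢ| = 1` and `|ω| = √(3/2)`. -/
noncomputable def mnorm (M : Matrix (Fin 3) (Fin 3) ℝ) : ℝ :=
  Real.sqrt ((∑ i, ∑ j, (M i j) ^ 2) / 2)

/-- Orthogonal projection onto `V¹ = ℝ·I` (the span of `ω`). -/
noncomputable def proj1 (M : Matrix (Fin 3) (Fin 3) ℝ) : Matrix (Fin 3) (Fin 3) ℝ :=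
  (Matrix.trace M / 3) • (1 : Matrix (Fin 3) (Fin 3) ℝ)

/-- `μ₁ = 𝔱₂𝔢₃ − 𝔱₃𝔢₂` as a matrix. -/
noncomputable def mu1 : Matrix (Fin 3) (Fin 3) ℝ := Matrix.of ![![0,0,0],![0,0,1],![0,-1,0]]
/-- `μ₂ = 𝔱₃𝔢₁ − 𝔱₁𝔢₃` as a matrix. -/
noncomputable def mu2 : Matrix (Fin 3) (Fin 3) ℝ := Matrix.of ![![0,0,-1],![0,0,0],![1,0,0]]
/-- `μ₃ = 𝔱₁𝔢₂ − 𝔱₂𝔢₁` as a matrix. -/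
noncomputable def mu3 : Matrix (Fin 3) (Fin 3) ℝ := Matrix.of ![![0,1,0],![-1,0,0],![0,0,0]]

lemma kw_trace_eq (α₁ α₂ α₃ : ℝ) :
    Matrix.trace (kwQ (α₁ • mu1 + α₂ • mu2 + α₃ • mu3)) = α₁ ^ 2 + α₂ ^ 2 + α₃ ^ 2 := by
  simp only [Matrix.trace, Matrix.diag, kwQ, eps, mu1, mu2, mu3, Matrix.of_apply,
    Matrix.add_apply, Matrix.smul_apply, Fin.sum_univ_three, Fin.isValue,
    Matrix.cons_val', Matrix.cons_val_zero, Matrix.cons_val_one, Matrix.head_cons,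
    Matrix.head_fin_const, Matrix.empty_val', Matrix.cons_val_fin_one,
    Matrix.cons_val_two, Matrix.tail_cons, smul_eq_mul]
  norm_num
  ring

lemma kw_proj_norm (M : Matrix (Fin 3) (Fin 3) ℝ) :
    mnorm (proj1 M) = |Matrix.trace M| / Real.sqrt 6 := by
  have hs : (∑ i, ∑ j, (proj1 M i j) ^ 2) / 2 = (Matrix.trace M) ^ 2 / 6 := by
    simp only [proj1, Matrix.smul_apply, Matrix.one_apply, Fin.sum_univ_three, smul_eq_mul, show ((0:Fin 3) = 2) = False by decide, show ((1:Fin 3) = 2) = False by decide,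
      show ((2:Fin 3) = 0) = False by decide, show ((2:Fin 3) = 1) = False by decide, show ((0:Fin 3) = 1) = False by decide, show ((1:Fin 3) = 0) = False by decide, if_false, if_true]
    ring
  rw [mnorm, hs, show (Matrix.trace M) ^ 2 / 6 = (|Matrix.trace M| / Real.sqrt 6) ^ 2 by
    rw [div_pow, sq_abs, Real.sq_sqrt (by norm_num : (0:ℝ) ≤ 6)]]
  exact Real.sqrt_sq (by positivity)

/-- Equation (4.1): for `v = α₁μ₁ + α₂μ₂ + α₃μ₃ ∈ V²`, the `V¹`-component of
`⋆₃(v ∧ v)` has norm exactly `(1/√6)(α₁² + α₂² + α₃²) = (1/√6)|v|²`. -/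
theorem kw_antisymmetric_quadratic_projection_norm (α₁ α₂ α₃ : ℝ) :
    mnorm (proj1 (kwQ (α₁ • mu1 + α₂ • mu2 + α₃ • mu3)))
      = (1 / Real.sqrt 6) * (α₁ ^ 2 + α₂ ^ 2 + α₃ ^ 2) ∧
    mnorm (proj1 (kwQ (α₁ • mu1 + α₂ • mu2 + α₃ • mu3)))
      = (1 / Real.sqrt 6) * (mnorm (α₁ • mu1 + α₂ • mu2 + α₃ • mu3)) ^ 2 := by
  have ht := kw_trace_eq α₁ α₂ α₃
  have hnn : (0:ℝ) ≤ α₁ ^ 2 + α₂ ^ 2 + α₃ ^ 2 := by positivity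
  have h1 : mnorm (proj1 (kwQ (α₁ • mu1 + α₂ • mu2 + α₃ • mu3)))
      = (1 / Real.sqrt 6) * (α₁ ^ 2 + α₂ ^ 2 + α₃ ^ 2) := by
    rw [kw_proj_norm, ht, abs_of_nonneg hnn]
    ring
  refine ⟨h1, ?_⟩
  rw [h1]
  congr 1
  have hsum : (∑ i, ∑ j, ((α₁ • mu1 + α₂ • mu2 + α₃ • mu3) i j) ^ 2) / 2
      = α₁ ^ 2 + α₂ ^ 2 + α₃ ^ 2 := by
    simp [mu1, mu2, mu3, Matrix.add_apply, Matrix.smul_apply, Fin.sum_univ_three,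
      Matrix.vecHead, Matrix.vecTail]
    ring
  rw [mnorm, hsum, Real.sq_sqrt hnn]
end

section
/- For any v in su(2)⊗ℝ³ decomposed as v = v⁽¹⁾ + v⁽²⁾ + v⁽³⁾ according to the orthogonal decomposition V¹⊕V²⊕V³, one has the estimate |(⋆₃(v∧v))⁽¹⁾ − ⋆₃(v⁽¹⁾∧v⁽¹⁾)| ≤ (1/√6)(|v⁽²⁾|² + |v⁽³⁾|²). -/
open Matrix

/-- Projection onto `V²` (antisymmetric part). -/
noncomputable def proj2 (M : Matrix (Fin 3) (Fin 3) ℝ) : Matrix (Fin 3) (Fin 3) ℝ :=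
  (1 / 2 : ℝ) • (M - Mᵀ)

/-- Projection onto `V³` (traceless symmetric part). -/
noncomputable def proj3 (M : Matrix (Fin 3) (Fin 3) ℝ) : Matrix (Fin 3) (Fin 3) ℝ :=
  (1 / 2 : ℝ) • (M + Mᵀ) - proj1 M

set_option maxHeartbeats 4000000 in
/-- The difference matrix is explicitly a multiple of the identity. -/
lemma kw_key (M : Matrix (Fin 3) (Fin 3) ℝ) :
    proj1 (kwQ M) - kwQ (proj1 M)
    = (((∑ i, ∑ j, (proj2 M i j)^2) - (∑ i, ∑ j, (proj3 M i j)^2)) / 6) •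
      (1 : Matrix (Fin 3) (Fin 3) ℝ) := by
  ext i j
  fin_cases i <;> fin_cases j <;>
  · simp only [kwQ, proj1, proj2, proj3, Matrix.trace, Matrix.diag, Fin.sum_univ_three,
      Matrix.sub_apply, Matrix.add_apply, Matrix.smul_apply, Matrix.one_apply,
      Matrix.of_apply, Matrix.transpose_apply, smul_eq_mul]
    norm_num [eps, Fin.ext_iff]
    try ring

/-- Lemma 3.4: for `v = v⁽¹⁾ + v⁽²⁾ + v⁽³⁾` in the orthogonal decomposition
`V¹ ⊕ V² ⊕ V³`, one has
`|(⋆₃(v∧v))⁽¹⁾ − ⋆₃(v⁽¹⁾∧v⁽¹⁾)| ≤ (1/√6)(|v⁽²⁾|² + |v⁽³⁾|²)`. -/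
theorem kw_quadratic_projection_estimate (M : Matrix (Fin 3) (Fin 3) ℝ) :
    mnorm (proj1 (kwQ M) - kwQ (proj1 M))
      ≤ (1 / Real.sqrt 6) * ((mnorm (proj2 M)) ^ 2 + (mnorm (proj3 M)) ^ 2) := by
  have ha : (0:ℝ) ≤ ∑ i, ∑ j, (proj2 M i j)^2 := by positivity
  have hb : (0:ℝ) ≤ ∑ i, ∑ j, (proj3 M i j)^2 := by positivity
  set a := ∑ i, ∑ j, (proj2 M i j)^2 with ha'
  set b := ∑ i, ∑ j, (proj3 M i j)^2 with hb'
  have h6 : (0:ℝ) < Real.sqrt 6 := Real.sqrt_pos.mpr (by norm_num)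
  have h6sq : Real.sqrt 6 ^ 2 = 6 := Real.sq_sqrt (by norm_num)
  have h2 : mnorm (proj2 M) ^ 2 = a / 2 := Real.sq_sqrt (by positivity)
  have h3 : mnorm (proj3 M) ^ 2 = b / 2 := Real.sq_sqrt (by positivity)
  rw [h2, h3, kw_key M]
  have hsum : (∑ i, ∑ j, ((((a - b) / 6) • (1 : Matrix (Fin 3) (Fin 3) ℝ)) i j)^2) / 2
      = (a - b)^2 / 24 := by
    simp [Fin.sum_univ_three, Matrix.smul_apply, Matrix.one_apply]
    ring
  have hR : (0:ℝ) ≤ 1 / Real.sqrt 6 * (a / 2 + b / 2) := by positivity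
  have hRsq : (1 / Real.sqrt 6 * (a / 2 + b / 2))^2 = (a + b)^2 / 24 := by
    rw [mul_pow, div_pow, one_pow, h6sq]; ring
  calc mnorm (((a - b) / 6) • (1 : Matrix (Fin 3) (Fin 3) ℝ))
      = Real.sqrt ((a - b)^2 / 24) := by rw [mnorm, hsum]
    _ ≤ Real.sqrt ((1 / Real.sqrt 6 * (a / 2 + b / 2))^2) := by
        apply Real.sqrt_le_sqrt
        rw [hRsq]
        nlinarith [mul_nonneg ha hb]
    _ = 1 / Real.sqrt 6 * (a / 2 + b / 2) := Real.sqrt_sq hR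
end

section
/- Let f : (0,1] → ℝ be positive and differentiable, ρ : (0,1] → ℝ absolutely continuous with ρ(y) = O(y) as y → 0⁺ and f(y) bounded. Then ∫₀¹ f(y)⁻¹ (f(y)|ρ(y)|)' dy = |ρ(1)| − ∫₀¹ (f'(y)/f(y))|ρ(y)| dy + (boundary term at 0 vanishes); in particular if f'/f = 2h + α with 2h(y)|ρ(y)| ≥ 0, then ∫₀¹ 2h|ρ| dy ≤ ∫₀¹ f⁻¹(f|ρ|)' dy + ∫₀¹ |α||ρ| dy − |ρ(1)| ≤ ∫₀¹ |ρ' + 2hρ + αρ| dy + ∫₀¹ |α||ρ| dy. -/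
open MeasureTheory Filter Asymptotics

/-!
For `g ≥ 0` one has `|ρ|' + g|ρ| = sign ρ · (ρ' + gρ) ≤ |ρ' + gρ|`; integrating over `(ε, 1]`
gives `∫ g|ρ| ≤ ∫ |ρ' + gρ| + |ρ(ε)|`, and `ρ(ε) → 0` because `ρ(y) = O(y)`. To make this
rigorous, `|ρ|` is replaced by the smooth `√(ρ² + δ²)` and `g|ρ|` is truncated at height `M`,
so that the fundamental theorem of calculus applies on `[ε, 1]`; `ε`, `δ` and `M` are then sent
to their limits simultaneously by Fatou's lemma.

Only `2h + α = f'/f` is known to be measurable, `h` and `α` separately need not be. The estimate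
is therefore applied to `g = (2h + α)⁺`, and `2h ≤ (2h + α)⁺ + |α| - (2h + α)⁻` does the rest.
-/

open Set Topology ENNReal

noncomputable def smoothAbs (δ x : ℝ) : ℝ := √(x ^ 2 + δ ^ 2)

lemma smoothAbs_pos {δ : ℝ} (hδ : δ ≠ 0) (x : ℝ) : 0 < smoothAbs δ x :=
  Real.sqrt_pos.2 (by positivity)

lemma abs_le_smoothAbs (δ x : ℝ) : |x| ≤ smoothAbs δ x :=
  Real.abs_le_sqrt (le_add_of_nonneg_right (sq_nonneg δ))

lemma sq_div_smoothAbs_le_abs (δ x : ℝ) : x ^ 2 / smoothAbs δ x ≤ |x| := by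
  rw [← sq_abs]
  rcases (abs_nonneg x).eq_or_lt with h | h
  · simp [← h]
  · rw [div_le_iff₀ (h.trans_le (abs_le_smoothAbs δ x)), sq]
    exact mul_le_mul_of_nonneg_left (abs_le_smoothAbs δ x) h.le

lemma continuous_smoothAbs : Continuous fun p : ℝ × ℝ => smoothAbs p.1 p.2 := by
  unfold smoothAbs
  fun_prop

@[fun_prop]
lemma measurable_smoothAbs (δ : ℝ) : Measurable (smoothAbs δ) :=
  (continuous_smoothAbs.comp (Continuous.prodMk_right δ)).measurable

lemma tendsto_sq_div_smoothAbs (x : ℝ) :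
    Tendsto (fun δ => x ^ 2 / smoothAbs δ x) (𝓝 0) (𝓝 |x|) := by
  rcases eq_or_ne x 0 with rfl | hx
  · simp
  have hlim : smoothAbs 0 x = |x| := by
    rw [smoothAbs, zero_pow two_ne_zero, add_zero, Real.sqrt_sq_eq_abs]
  have hsq : x ^ 2 / |x| = |x| := by
    rw [← sq_abs, sq, mul_div_cancel_right₀ _ (abs_ne_zero.2 hx)]
  rw [← hsq, ← hlim]
  exact tendsto_const_nhds.div ((continuous_smoothAbs.comp (Continuous.prodMk_left x)).tendsto 0)
    (hlim ▸ abs_ne_zero.2 hx)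

lemma Filter.Tendsto.smoothAbs_zero {ι : Type*} {l : Filter ι} {δ u : ι → ℝ}
    (hδ : Tendsto δ l (𝓝 0)) (hu : Tendsto u l (𝓝 0)) :
    Tendsto (fun i => smoothAbs (δ i) (u i)) l (𝓝 0) := by
  have h0 : smoothAbs 0 0 = 0 := by simp [smoothAbs]
  rw [← h0]
  exact (continuous_smoothAbs.tendsto (0, 0)).comp (hδ.prodMk_nhds hu)

lemma HasDerivAt.smoothAbs {ρ : ℝ → ℝ} {ρ' y δ : ℝ} (hδ : δ ≠ 0) (hρ : HasDerivAt ρ ρ' y) :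
    HasDerivAt (fun y => smoothAbs δ (ρ y)) (ρ y * ρ' / smoothAbs δ (ρ y)) y := by
  unfold _root_.smoothAbs
  convert ((hρ.fun_pow 2).add_const (δ ^ 2)).sqrt (by positivity) using 1
  field_simp
  ring

noncomputable def regMulAbs (δ M g x : ℝ) : ℝ := min (g * (x ^ 2 / smoothAbs δ x)) M

lemma regMulAbs_nonneg {δ M g : ℝ} (hδ : δ ≠ 0) (hM : 0 ≤ M) (hg : 0 ≤ g) (x : ℝ) :
    0 ≤ regMulAbs δ M g x :=
  le_min (mul_nonneg hg (div_nonneg (sq_nonneg _) (smoothAbs_pos hδ _).le)) hM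

lemma mul_div_smoothAbs_add_regMulAbs_le {δ : ℝ} (hδ : δ ≠ 0) (M g x x' : ℝ) :
    x * x' / smoothAbs δ x + regMulAbs δ M g x ≤ |x' + g * x| := by
  calc x * x' / smoothAbs δ x + regMulAbs δ M g x
      ≤ x * x' / smoothAbs δ x + g * (x ^ 2 / smoothAbs δ x) := by
        gcongr
        exact min_le_left _ _
    _ = x * (x' + g * x) / smoothAbs δ x := by ring
    _ ≤ |x| * |x' + g * x| / smoothAbs δ x :=
        div_le_div_of_nonneg_right (abs_mul x _ ▸ le_abs_self _) (smoothAbs_pos hδ x).le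
    _ ≤ |x' + g * x| := by
        rw [div_le_iff₀ (smoothAbs_pos hδ x), mul_comm]
        exact mul_le_mul_of_nonneg_left (abs_le_smoothAbs δ x) (abs_nonneg _)

lemma tendsto_regMulAbs {g : ℝ} (hg : 0 ≤ g) (x : ℝ) :
    Tendsto (fun n : ℕ => regMulAbs (1 / (n + 1)) n g x) atTop (𝓝 (g * |x|)) := by
  refine (((tendsto_sq_div_smoothAbs x).comp
    tendsto_one_div_add_atTop_nhds_zero_nat).const_mul g).congr' ?_
  filter_upwards [tendsto_natCast_atTop_atTop.eventually_ge_atTop (g * |x|)] with n hn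
  exact (min_eq_left ((mul_le_mul_of_nonneg_left (sq_div_smoothAbs_le_abs _ x) hg).trans hn)).symm

lemma AEMeasurable.regMulAbs {μ : Measure ℝ} {g ρ : ℝ → ℝ} (hg : AEMeasurable g μ)
    (hρ : AEMeasurable ρ μ) (δ M : ℝ) :
    AEMeasurable (fun y => regMulAbs δ M (g y) (ρ y)) μ := by
  unfold _root_.regMulAbs
  fun_prop

section

variable {μ : Measure ℝ} {s : Set ℝ} {f f' : ℝ → ℝ}

lemma aemeasurable_restrict_of_hasDerivAt (hs : MeasurableSet s)
    (hf : ∀ y ∈ s, HasDerivAt f (f' y) y) : AEMeasurable f (μ.restrict s) :=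
  ContinuousOn.aemeasurable (fun y hy => (hf y hy).continuousAt.continuousWithinAt) hs

lemma aemeasurable_restrict_deriv_of_hasDerivAt (hs : MeasurableSet s)
    (hf : ∀ y ∈ s, HasDerivAt f (f' y) y) : AEMeasurable f' (μ.restrict s) :=
  (measurable_deriv f).aemeasurable.congr
    ((ae_restrict_iff' hs).2 (ae_of_all _ fun y hy => (hf y hy).deriv))

end

lemma lintegral_le_of_tendsto_of_le_add {α : Type*} [MeasurableSpace α] {μ : Measure α}
    {F : ℕ → α → ℝ≥0∞} {f : α → ℝ≥0∞} {C : ℝ≥0∞} {c : ℕ → ℝ≥0∞}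
    (hF : ∀ n, AEMeasurable (F n) μ) (hlim : ∀ᵐ x ∂μ, Tendsto (fun n => F n x) atTop (𝓝 (f x)))
    (hle : ∀ n, ∫⁻ x, F n x ∂μ ≤ C + c n) (hc : Tendsto c atTop (𝓝 0)) :
    ∫⁻ x, f x ∂μ ≤ C :=
  calc ∫⁻ x, f x ∂μ = ∫⁻ x, liminf (fun n => F n x) atTop ∂μ :=
        lintegral_congr_ae (hlim.mono fun _ hx => hx.liminf_eq.symm)
    _ ≤ liminf (fun n => ∫⁻ x, F n x ∂μ) atTop := lintegral_liminf_le' hF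
    _ ≤ liminf (fun n => C + c n) atTop := liminf_le_liminf (Eventually.of_forall hle)
    _ = C := by simpa using (tendsto_const_nhds.add hc).liminf_eq

section

variable {a b : ℝ} {g ρ ρ' : ℝ → ℝ}

theorem setLIntegral_regMulAbs_le {δ M : ℝ} (hδ : δ ≠ 0) (hM : 0 ≤ M) (hab : a ≤ b)
    (hg : AEMeasurable g (volume.restrict (Ioc a b))) (hg0 : ∀ y ∈ Ioc a b, 0 ≤ g y)
    (hρ : ∀ y ∈ Icc a b, HasDerivAt ρ (ρ' y) y)
    (hE : IntegrableOn (fun y => ρ' y + g y * ρ y) (Ioc a b)) :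
    ∫⁻ y in Ioc a b, ENNReal.ofReal (regMulAbs δ M (g y) (ρ y))
      ≤ (∫⁻ y in Ioc a b, ENNReal.ofReal |ρ' y + g y * ρ y|)
        + ENNReal.ofReal (smoothAbs δ (ρ a)) := by
  set θ := fun y => regMulAbs δ M (g y) (ρ y)
  have hΨ : ∀ y ∈ Icc a b, HasDerivAt (fun y => smoothAbs δ (ρ y))
      (ρ y * ρ' y / smoothAbs δ (ρ y)) y := fun y hy => (hρ y hy).smoothAbs hδ
  have hΨc : ContinuousOn (fun y => smoothAbs δ (ρ y)) (Icc a b) :=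
    fun y hy => (hΨ y hy).continuousAt.continuousWithinAt
  have hθ0 : ∀ y ∈ Ioc a b, 0 ≤ θ y := fun y hy => regMulAbs_nonneg hδ hM (hg0 y hy) _
  have hθ : IntegrableOn θ (Ioc a b) := by
    have hρm := aemeasurable_restrict_of_hasDerivAt (μ := volume) measurableSet_Ioc
      fun y hy => hρ y (Ioc_subset_Icc_self hy)
    refine IntegrableOn.of_bound measure_Ioc_lt_top
      (hg.regMulAbs hρm δ M).aestronglyMeasurable M ?_
    filter_upwards [ae_restrict_mem measurableSet_Ioc] with y hy
    rw [Real.norm_of_nonneg (hθ0 y hy)]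
    exact min_le_right _ _
  have hφ : IntegrableOn (fun y => |ρ' y + g y * ρ y| - θ y) (Icc a b) := by
    rw [integrableOn_Icc_iff_integrableOn_Ioc]
    exact hE.abs.sub hθ
  have hftc := intervalIntegral.sub_le_integral_of_hasDeriv_right_of_le hab hΨc
    (fun y hy => (hΨ y (Ioo_subset_Icc_self hy)).hasDerivWithinAt) hφ
    (fun y _ => le_sub_right_of_add_le
      (mul_div_smoothAbs_add_regMulAbs_le hδ M (g y) (ρ y) (ρ' y)))
  rw [intervalIntegral.integral_of_le hab, integral_sub hE.abs hθ] at hftc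
  rw [← ofReal_integral_eq_lintegral_ofReal hθ
      ((ae_restrict_iff' measurableSet_Ioc).2 (ae_of_all _ hθ0)),
    ← ofReal_integral_eq_lintegral_ofReal hE.abs (ae_of_all _ fun _ => abs_nonneg _),
    ← ENNReal.ofReal_add (integral_nonneg fun _ => abs_nonneg _) (smoothAbs_pos hδ _).le]
  exact ENNReal.ofReal_le_ofReal (by linarith [(smoothAbs_pos hδ (ρ b)).le])

theorem setLIntegral_Ioc_regMulAbs_le {ε δ M : ℝ} (hδ : δ ≠ 0) (hM : 0 ≤ M) (haε : a < ε)
    (hεb : ε ≤ b) (hg : AEMeasurable g (volume.restrict (Ioc a b)))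
    (hg0 : ∀ y ∈ Ioc a b, 0 ≤ g y) (hρ : ∀ y ∈ Ioc a b, HasDerivAt ρ (ρ' y) y)
    (hE : IntegrableOn (fun y => ρ' y + g y * ρ y) (Ioc a b)) :
    ∫⁻ y in Ioc ε b, ENNReal.ofReal (regMulAbs δ M (g y) (ρ y))
      ≤ (∫⁻ y in Ioc a b, ENNReal.ofReal |ρ' y + g y * ρ y|)
        + ENNReal.ofReal (smoothAbs δ (ρ ε)) := by
  have hsub : Icc ε b ⊆ Ioc a b := Icc_subset_Ioc haε le_rfl
  calc ∫⁻ y in Ioc ε b, ENNReal.ofReal (regMulAbs δ M (g y) (ρ y))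
      ≤ (∫⁻ y in Ioc ε b, ENNReal.ofReal |ρ' y + g y * ρ y|)
          + ENNReal.ofReal (smoothAbs δ (ρ ε)) :=
        setLIntegral_regMulAbs_le hδ hM hεb
          (hg.mono_measure (Measure.restrict_mono (Ioc_subset_Icc_self.trans hsub) le_rfl))
          (fun y hy => hg0 y (hsub (Ioc_subset_Icc_self hy))) (fun y hy => hρ y (hsub hy))
          (hE.mono_set (Ioc_subset_Icc_self.trans hsub))
    _ ≤ _ := by gcongr

theorem setLIntegral_mul_abs_le_of_tendsto_zero
    (hg : AEMeasurable g (volume.restrict (Ioc a b))) (hg0 : ∀ y ∈ Ioc a b, 0 ≤ g y)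
    (hρ : ∀ y ∈ Ioc a b, HasDerivAt ρ (ρ' y) y) (hρa : Tendsto ρ (𝓝[>] a) (𝓝 0)) :
    ∫⁻ y in Ioc a b, ENNReal.ofReal (g y * |ρ y|)
      ≤ ∫⁻ y in Ioc a b, ENNReal.ofReal |ρ' y + g y * ρ y| := by
  rcases le_or_gt b a with hba | hab
  · simp [Ioc_eq_empty hba.not_gt]
  rcases eq_or_ne (∫⁻ y in Ioc a b, ENNReal.ofReal |ρ' y + g y * ρ y|) ⊤ with hC | hC
  · exact hC ▸ le_top
  have hρm := aemeasurable_restrict_of_hasDerivAt (μ := volume) measurableSet_Ioc hρ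
  have hE : IntegrableOn (fun y => ρ' y + g y * ρ y) (Ioc a b) := by
    refine ⟨((aemeasurable_restrict_deriv_of_hasDerivAt measurableSet_Ioc hρ).add
      (hg.mul hρm)).aestronglyMeasurable, ?_⟩
    rw [hasFiniteIntegral_iff_norm]
    simpa only [Real.norm_eq_abs] using hC.lt_top
  obtain ⟨ε, -, hεab, hεa⟩ := exists_seq_strictAnti_tendsto' hab
  set δ : ℕ → ℝ := fun n => 1 / (n + 1)
  set F : ℕ → ℝ → ℝ≥0∞ := fun n => (Ioc (ε n) b).indicator fun y =>
    ENNReal.ofReal (regMulAbs (δ n) n (g y) (ρ y))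
  have hF_le (n : ℕ) : ∫⁻ y in Ioc a b, F n y
      ≤ (∫⁻ y in Ioc a b, ENNReal.ofReal |ρ' y + g y * ρ y|)
        + ENNReal.ofReal (smoothAbs (δ n) (ρ (ε n))) :=
    calc ∫⁻ y in Ioc a b, F n y ≤ ∫⁻ y, F n y := setLIntegral_le_lintegral _ _
      _ = ∫⁻ y in Ioc (ε n) b, ENNReal.ofReal (regMulAbs (δ n) n (g y) (ρ y)) :=
          lintegral_indicator measurableSet_Ioc _
      _ ≤ _ := setLIntegral_Ioc_regMulAbs_le (by positivity) n.cast_nonneg (hεab n).1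
          (hεab n).2.le hg hg0 hρ hE
  have hF_lim : ∀ y ∈ Ioc a b,
      Tendsto (fun n => F n y) atTop (𝓝 (ENNReal.ofReal (g y * |ρ y|))) := fun y hy =>
    (ENNReal.tendsto_ofReal (tendsto_regMulAbs (hg0 y hy) (ρ y))).congr' <|
      (hεa.eventually (eventually_lt_nhds hy.1)).mono fun n hn =>
        (indicator_of_mem (show y ∈ Ioc (ε n) b from ⟨hn, hy.2⟩) _).symm
  refine lintegral_le_of_tendsto_of_le_add (fun n =>
      (ENNReal.measurable_ofReal.comp_aemeasurable (hg.regMulAbs hρm _ _)).indicator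
        measurableSet_Ioc) ((ae_restrict_iff' measurableSet_Ioc).2 (ae_of_all _ hF_lim)) hF_le ?_
  rw [← ENNReal.ofReal_zero]
  exact ENNReal.tendsto_ofReal (tendsto_one_div_add_atTop_nhds_zero_nat.smoothAbs_zero
    (hρa.comp (tendsto_nhdsWithin_iff.2 ⟨hεa, Eventually.of_forall fun n => (hεab n).1⟩)))

theorem setLIntegral_posPart_mul_abs_le_of_tendsto_zero {q : ℝ → ℝ}
    (hq : AEMeasurable q (volume.restrict (Ioc a b)))
    (hρ : ∀ y ∈ Ioc a b, HasDerivAt ρ (ρ' y) y) (hρa : Tendsto ρ (𝓝[>] a) (𝓝 0)) :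
    ∫⁻ y in Ioc a b, ENNReal.ofReal (max (q y) 0 * |ρ y|)
      ≤ (∫⁻ y in Ioc a b, ENNReal.ofReal |ρ' y + q y * ρ y|)
        + ∫⁻ y in Ioc a b, ENNReal.ofReal (max (-q y) 0 * |ρ y|) := by
  have hρm := aemeasurable_restrict_of_hasDerivAt (μ := volume) measurableSet_Ioc hρ
  refine (setLIntegral_mul_abs_le_of_tendsto_zero (hq.max aemeasurable_const)
    (fun _ _ => le_max_right _ 0) hρ hρa).trans ?_
  rw [← lintegral_add_right' _ (by fun_prop)]
  refine lintegral_mono fun y => ?_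
  rw [← ENNReal.ofReal_add (abs_nonneg _) (by positivity)]
  refine ENNReal.ofReal_le_ofReal ?_
  calc |ρ' y + max (q y) 0 * ρ y| = |(ρ' y + q y * ρ y) + max (-q y) 0 * ρ y| := by
        congr 1
        linear_combination ρ y * max_zero_sub_max_neg_zero_eq_self (q y)
    _ ≤ |ρ' y + q y * ρ y| + |max (-q y) 0 * ρ y| := abs_add_le _ _
    _ = |ρ' y + q y * ρ y| + max (-q y) 0 * |ρ y| := by
        rw [abs_mul, abs_of_nonneg (le_max_right (-q y) 0)]

theorem setLIntegral_mul_abs_le_add_of_tendsto_zero {α : ℝ → ℝ}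
    (hgα : AEMeasurable (fun y => g y + α y) (volume.restrict (Ioc a b)))
    (hg0 : ∀ y ∈ Ioc a b, 0 ≤ g y) (hρ : ∀ y ∈ Ioc a b, HasDerivAt ρ (ρ' y) y)
    (hρa : Tendsto ρ (𝓝[>] a) (𝓝 0)) :
    ∫⁻ y in Ioc a b, ENNReal.ofReal (g y * |ρ y|)
      ≤ (∫⁻ y in Ioc a b, ENNReal.ofReal |ρ' y + g y * ρ y + α y * ρ y|)
        + ∫⁻ y in Ioc a b, ENNReal.ofReal (|α y| * |ρ y|) := by
  set p := fun y => max (g y + α y) 0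
  set m := fun y => max (-(g y + α y)) 0
  have hpm : ∀ y, p y - m y = g y + α y := fun y => max_zero_sub_max_neg_zero_eq_self _
  have hm : ∀ y ∈ Ioc a b, m y ≤ |α y| := fun y hy =>
    max_le (by linarith [hg0 y hy, neg_le_abs (α y)]) (abs_nonneg _)
  have hρm := aemeasurable_restrict_of_hasDerivAt (μ := volume) measurableSet_Ioc hρ
  have hofReal_add : ∀ y ∈ Ioc a b, ∀ c, 0 ≤ c → ENNReal.ofReal (c * |ρ y|)
      + ENNReal.ofReal ((|α y| - m y) * |ρ y|) = ENNReal.ofReal ((c + (|α y| - m y)) * |ρ y|) :=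
    fun y hy c hc => by
      rw [← ENNReal.ofReal_add (mul_nonneg hc (abs_nonneg _))
        (mul_nonneg (sub_nonneg.2 (hm y hy)) (abs_nonneg _)), add_mul]
  calc ∫⁻ y in Ioc a b, ENNReal.ofReal (g y * |ρ y|)
      ≤ ∫⁻ y in Ioc a b,
          (ENNReal.ofReal (p y * |ρ y|) + ENNReal.ofReal ((|α y| - m y) * |ρ y|)) := by
        refine setLIntegral_mono' measurableSet_Ioc fun y hy => ?_
        rw [hofReal_add y hy _ (le_max_right _ _)]
        refine ENNReal.ofReal_le_ofReal (mul_le_mul_of_nonneg_right ?_ (abs_nonneg _))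
        linarith [hpm y, neg_abs_le (α y)]
    _ = (∫⁻ y in Ioc a b, ENNReal.ofReal (p y * |ρ y|))
          + ∫⁻ y in Ioc a b, ENNReal.ofReal ((|α y| - m y) * |ρ y|) :=
        lintegral_add_left' (by fun_prop) _
    _ ≤ (∫⁻ y in Ioc a b, ENNReal.ofReal |ρ' y + (g y + α y) * ρ y|)
          + ((∫⁻ y in Ioc a b, ENNReal.ofReal (m y * |ρ y|))
            + ∫⁻ y in Ioc a b, ENNReal.ofReal ((|α y| - m y) * |ρ y|)) := by
        rw [← add_assoc]
        gcongr
        exact setLIntegral_posPart_mul_abs_le_of_tendsto_zero hgα hρ hρa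
    _ = _ := by
        rw [← lintegral_add_left' (by fun_prop)]
        congr 1
        · simp only [add_mul, add_assoc]
        · refine setLIntegral_congr_fun measurableSet_Ioc fun y hy => ?_
          rw [hofReal_add y hy _ (le_max_right _ _)]
          congr 1
          ring

end

theorem kw_integration_by_parts_estimate_general
    (f f' ρ ρ' h α : ℝ → ℝ)
    (hfderiv : ∀ y ∈ Set.Ioc (0:ℝ) 1, HasDerivAt f (f' y) y)
    (hfactor : ∀ y ∈ Set.Ioc (0:ℝ) 1, f' y / f y = 2 * h y + α y)
    (hh : ∀ y ∈ Set.Ioc (0:ℝ) 1, 0 ≤ h y)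
    (hρderiv : ∀ y ∈ Set.Ioc (0:ℝ) 1, HasDerivAt ρ (ρ' y) y)
    (hρsmall : ρ =O[nhdsWithin 0 (Set.Ioi 0)] (fun y => y)) :
    ∫⁻ y in Set.Ioc (0:ℝ) 1, ENNReal.ofReal (2 * h y * |ρ y|)
      ≤ (∫⁻ y in Set.Ioc (0:ℝ) 1,
            ENNReal.ofReal (|ρ' y + 2 * h y * ρ y + α y * ρ y|))
        + ∫⁻ y in Set.Ioc (0:ℝ) 1, ENNReal.ofReal (|α y| * |ρ y|) := by
  have hq : AEMeasurable (fun y => 2 * h y + α y) (volume.restrict (Ioc 0 1)) :=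
    ((aemeasurable_restrict_deriv_of_hasDerivAt measurableSet_Ioc hfderiv).div
      (aemeasurable_restrict_of_hasDerivAt measurableSet_Ioc hfderiv)).congr
      ((ae_restrict_iff' measurableSet_Ioc).2 (ae_of_all _ hfactor))
  exact setLIntegral_mul_abs_le_add_of_tendsto_zero hq (fun y hy => by linarith [hh y hy])
    hρderiv (hρsmall.trans_tendsto (tendsto_nhdsWithin_of_tendsto_nhds tendsto_id))

/-- Scalar model of the integration-by-parts chain (3.22): if `f > 0` is a
bounded differentiable integrating factor with `f'/f = 2h + α`, `h ≥ 0`, and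
`ρ` is differentiable with `ρ(y) = O(y)` as `y → 0⁺`, then
`∫₀¹ 2h|ρ| ≤ ∫₀¹ |ρ' + 2hρ + αρ| + ∫₀¹ |α||ρ|`
(the boundary term at `y = 0` vanishes since `ρ(y) = O(y)`). -/
theorem kw_integration_by_parts_estimate
    (f f' ρ ρ' h α : ℝ → ℝ)
    (hfpos : ∀ y ∈ Set.Ioc (0:ℝ) 1, 0 < f y)
    (hfderiv : ∀ y ∈ Set.Ioc (0:ℝ) 1, HasDerivAt f (f' y) y)
    (hfbdd : ∃ B : ℝ, ∀ y ∈ Set.Ioc (0:ℝ) 1, |f y| ≤ B)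
    (hfactor : ∀ y ∈ Set.Ioc (0:ℝ) 1, f' y / f y = 2 * h y + α y)
    (hh : ∀ y ∈ Set.Ioc (0:ℝ) 1, 0 ≤ h y)
    (hρderiv : ∀ y ∈ Set.Ioc (0:ℝ) 1, HasDerivAt ρ (ρ' y) y)
    (hρsmall : ρ =O[nhdsWithin 0 (Set.Ioi 0)] (fun y => y)) :
    ∫⁻ y in Set.Ioc (0:ℝ) 1, ENNReal.ofReal (2 * h y * |ρ y|)
      ≤ (∫⁻ y in Set.Ioc (0:ℝ) 1,
            ENNReal.ofReal (|ρ' y + 2 * h y * ρ y + α y * ρ y|))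
        + ∫⁻ y in Set.Ioc (0:ℝ) 1, ENNReal.ofReal (|α y| * |ρ y|) :=
  kw_integration_by_parts_estimate_general f f' ρ ρ' h α hfderiv hfactor hh hρderiv hρsmall
end
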